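/- arXiv:1507.06546 — 3 statements merged into one kernel-verified Lean document; each statement's English description precedes it below -/
import Mathlib

section
/- Dissipative energy inequality for the multilayer shallow model (main Theorem). Let N ≥ 1, and let ρ, g > 0 be constants. Let h_1,…,h_N > 0, u_1,…,u_N : ℝ×ℝ² → ℝ², p_S, z_b : ℝ×ℝ² → ℝ, G_{α+1/2} : ℝ×ℝ² → ℝ for α = 0,…,N, η_{α+1/2} ≥ 0 for α = 1,…,N, μ ≥ 0, and h_{α+1/2} > 0 for α = 1,…,N−1 be continuously differentiable functions of (t,x). Set h := Σ_{α=1}^N h_α, u_0 := 0, u_{N+1} := 0, h_{N+1/2} := h_N, assume G_{N+1/2} = 0 and u_1(t,x) ≠ 0 at every point, and define K_{1/2} := −μ ρ g h u_1/|u_1| and K_{α+1/2} := −η_{α+1/2}(u_{α+1} − u_α)/h_{α+1/2} for α = 1,…,N. Assume that at every point, for each α = 1,…,N, the mass equation ∂_t h_α + div(h_α u_α) = G_{α+1/2} − G_{α−1/2} and the momentum equation ρ ∂_t(h_α u_α) + ρ div(h_α u_α ⊗ u_α) + h_α ∇p_S + ρ g h_α ∇(z_b + h) = K_{α−1/2}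 − K_{α+1/2} + (ρ/2) G_{α+1/2}(u_{α+1} + u_α) − (ρ/2) G_{α−1/2}(u_α + u_{α−1}) hold. Then, with E_α := h_α(|u_α|²/2 + p_S/ρ + g(z_b + h/2)), at every point: ρ ∂_t(Σ_{α=1}^N E_α) + ρ div(Σ_{α=1}^N (E_α + g h_α h/2) u_α) ≤ h ∂_t(p_S + ρ g z_b) − μ ρ g h |u_1| − (η_{N+1/2}/h_N)|u_N|² − Σ_{α=1}^{N−1} (η_{α+1/2}/h_{α+1/2}) |u_{α+1} − u_α|² − G_{1/2}(p_S + ρ g (z_b + h)). -/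
/-- Partial derivative in time (first coordinate of `ℝ × ℝ × ℝ`). -/
noncomputable def pt (f : ℝ × ℝ × ℝ → ℝ) (p : ℝ × ℝ × ℝ) : ℝ := fderiv ℝ f p (1, 0, 0)

/-- Partial derivative in the first spatial coordinate. -/
noncomputable def px (f : ℝ × ℝ × ℝ → ℝ) (p : ℝ × ℝ × ℝ) : ℝ := fderiv ℝ f p (0, 1, 0)

/-- Partial derivative in the second spatial coordinate. -/
noncomputable def py (f : ℝ × ℝ × ℝ → ℝ) (p : ℝ × ℝ × ℝ) : ℝ := fderiv ℝ f p (0, 0, 1)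

/-- Spatial divergence of a planar vector field. -/
noncomputable def div2 (v : ℝ × ℝ × ℝ → ℝ × ℝ) (p : ℝ × ℝ × ℝ) : ℝ :=
  px (fun q => (v q).1) p + py (fun q => (v q).2) p

/-- Spatial gradient of a scalar field. -/
noncomputable def grad2 (f : ℝ × ℝ × ℝ → ℝ) (p : ℝ × ℝ × ℝ) : ℝ × ℝ := (px f p, py f p)

/-- Componentwise time derivative of a planar vector field. -/
noncomputable def ptv (v : ℝ × ℝ × ℝ → ℝ × ℝ) (p : ℝ × ℝ × ℝ) : ℝ × ℝ :=
  (pt (fun q => (v q).1) p, pt (fun q => (v q).2) p)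

/-- `div (h u ⊗ u)` : the vector whose i-th component is `div (h uᵢ u)`. -/
noncomputable def divOuter (h : ℝ × ℝ × ℝ → ℝ) (u : ℝ × ℝ × ℝ → ℝ × ℝ)
    (p : ℝ × ℝ × ℝ) : ℝ × ℝ :=
  (div2 (fun q => (h q * (u q).1) • u q) p, div2 (fun q => (h q * (u q).2) • u q) p)

/-- Euclidean norm on `ℝ²`. -/
noncomputable def eunorm (a : ℝ × ℝ) : ℝ := Real.sqrt (a.1 ^ 2 + a.2 ^ 2)

/-!
Dotting the momentum equation of layer `α` with `u_α` and adding `ρ (Φ - |u_α|²/2)` times its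
mass equation, where `Φ = p_S/ρ + g (z_b + h)` is the hydrostatic potential shared by all
layers, gives a conservation law for `h_α (|u_α|²/2 + Φ)` with flux `h_α (|u_α|²/2 + Φ) u_α`,
whose sources are the interface exchange terms and `ρ h_α ∂ₜΦ`. Since `∑ h_α = h`, the energies
sum to `∑ E_α = ∑ h_α (|u_α|²/2 + Φ) - g h²/2`, and the part `ρ g h ∂ₜh` of `ρ h ∂ₜΦ` cancels.
The exchange terms telescope over the layers: the mass exchanges leave `-ρ Φ G_{1/2}`, the terms
`G_{α+1/2} u_α·u_{α+1}` vanish at both ends, and the friction terms leave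
`u_1·K_{1/2} = -μρgh|u_1|` plus the viscous dissipation
`(u_{α+1} - u_α)·K_{α+1/2} = -η_{α+1/2} |u_{α+1} - u_α|² / h_{α+1/2}`.
So the inequality holds with equality.
-/

open Finset

noncomputable def dot2 (a b : ℝ × ℝ) : ℝ := a.1 * b.1 + a.2 * b.2

theorem dot2_self (a : ℝ × ℝ) : dot2 a a = eunorm a ^ 2 := by
  rw [eunorm, Real.sq_sqrt (by positivity), dot2]; ring

theorem dot2_smul_right (a b : ℝ × ℝ) (c : ℝ) : dot2 a (c • b) = c * dot2 a b := by
  simp only [dot2, Prod.smul_fst, Prod.smul_snd, smul_eq_mul]; ring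

theorem dot2_div_eunorm_smul_self (a : ℝ × ℝ) (c : ℝ) :
    dot2 a ((c / eunorm a) • a) = c * eunorm a := by
  rw [dot2_smul_right, dot2_self, sq, div_mul_eq_mul_div, mul_div_assoc, mul_self_div_self]

theorem eunorm_neg (a : ℝ × ℝ) : eunorm (-a) = eunorm a := by
  simp only [eunorm, Prod.fst_neg, Prod.snd_neg, neg_sq]

theorem interface_exchange (ρ C Gm Gp : ℝ) (um u up Km Kp : ℝ × ℝ) :
    (C - ρ * eunorm u ^ 2 / 2) * (Gp - Gm)
        + dot2 u (Km - Kp + (ρ / 2 * Gp) • (up + u) - (ρ / 2 * Gm) • (u + um))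
      = C * (Gp - Gm) - (dot2 up Kp - dot2 u Km)
        + (ρ / 2 * Gp * dot2 u up - ρ / 2 * Gm * dot2 um u) + dot2 (up - u) Kp := by
  rw [← dot2_self]
  simp only [dot2, Prod.fst_add, Prod.snd_add, Prod.fst_sub, Prod.snd_sub, Prod.smul_fst,
    Prod.smul_snd, smul_eq_mul]
  ring

theorem sum_Icc_sub_pred {M : Type*} [AddCommGroup M] (f : ℕ → M) (n : ℕ) :
    ∑ α ∈ Icc 1 n, (f α - f (α - 1)) = f n - f 0 := by
  induction n with
  | zero => simp
  | succ n ih => rw [sum_Icc_succ_top (by omega), ih, Nat.add_sub_cancel]; abel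

theorem sum_interface_exchange (n : ℕ) (ρ C : ℝ) (G c : ℕ → ℝ) (u K : ℕ → ℝ × ℝ)
    (hG : G (n + 1) = 0) (hu_bot : u 0 = 0) (hu_top : u (n + 1 + 1) = 0)
    (hK : ∀ α ∈ Icc 1 (n + 1), K α = (-c α) • (u (α + 1) - u α)) :
    ∑ α ∈ Icc 1 (n + 1), ((C - ρ * eunorm (u α) ^ 2 / 2) * (G α - G (α - 1))
        + dot2 (u α) (K (α - 1) - K α + (ρ / 2 * G α) • (u (α + 1) + u α)
          - (ρ / 2 * G (α - 1)) • (u α + u (α - 1))))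
      = dot2 (u 1) (K 0) - C * G 0 - c (n + 1) * eunorm (u (n + 1)) ^ 2
        - ∑ α ∈ Icc 1 n, c α * eunorm (u (α + 1) - u α) ^ 2 := by
  -- `u (α - 1 + 1)` instead of `u α` puts the middle terms in the form `f α - f (α - 1)`
  have hterm : ∀ α ∈ Icc 1 (n + 1), (C - ρ * eunorm (u α) ^ 2 / 2) * (G α - G (α - 1))
        + dot2 (u α) (K (α - 1) - K α + (ρ / 2 * G α) • (u (α + 1) + u α)
          - (ρ / 2 * G (α - 1)) • (u α + u (α - 1)))
      = C * (G α - G (α - 1))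
        - (dot2 (u (α + 1)) (K α) - dot2 (u (α - 1 + 1)) (K (α - 1)))
        + (ρ / 2 * G α * dot2 (u α) (u (α + 1))
          - ρ / 2 * G (α - 1) * dot2 (u (α - 1)) (u (α - 1 + 1)))
        - c α * eunorm (u (α + 1) - u α) ^ 2 := by
    intro α hα
    have hdiss : dot2 (u (α + 1) - u α) (K α) = -(c α * eunorm (u (α + 1) - u α) ^ 2) := by
      rw [hK α hα, dot2_smul_right, dot2_self, neg_mul]
    rw [Nat.sub_add_cancel (mem_Icc.mp hα).1, interface_exchange, hdiss]
    ring
  rw [sum_congr rfl hterm, sum_sub_distrib, sum_add_distrib, sum_sub_distrib, ← mul_sum,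
    sum_Icc_sub_pred G, sum_Icc_sub_pred (fun β => dot2 (u (β + 1)) (K β)),
    sum_Icc_sub_pred (fun β => ρ / 2 * G β * dot2 (u β) (u (β + 1))),
    sum_Icc_succ_top (by omega), hG, hu_bot, hu_top, zero_sub (u (n + 1)), eunorm_neg]
  simp only [dot2, Prod.fst_zero, Prod.snd_zero, zero_add]
  ring

section Calculus

variable {F : Type*} [NormedAddCommGroup F] [NormedSpace ℝ F]

theorem DifferentiableAt.eunorm_sq {w : F → ℝ × ℝ} {p : F} (hw : DifferentiableAt ℝ w p) :
    DifferentiableAt ℝ (fun q => eunorm (w q) ^ 2) p := by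
  simp only [← dot2_self, dot2]
  fun_prop

theorem mul_fderiv_hydrostatic {ρ g : ℝ} (hρ : ρ ≠ 0) {P Y : F → ℝ} {p v : F}
    (hP : DifferentiableAt ℝ P p) (hY : DifferentiableAt ℝ Y p) :
    ρ * fderiv ℝ (fun q => ρ⁻¹ * P q + g * Y q) p v
      = fderiv ℝ P p v + ρ * g * fderiv ℝ Y p v := by
  simp (disch := fun_prop) only [fderiv_fun_add, fderiv_const_mul, add_apply, smul_apply,
    smul_eq_mul]
  field_simp

end Calculus

theorem smul_grad2_hydrostatic {ρ g : ℝ} (hρ : ρ ≠ 0) {P Y : ℝ × ℝ × ℝ → ℝ} {p : ℝ × ℝ × ℝ}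
    (hP : DifferentiableAt ℝ P p) (hY : DifferentiableAt ℝ Y p) (c : ℝ) :
    (ρ * c) • grad2 (fun q => ρ⁻¹ * P q + g * Y q) p
      = c • grad2 P p + (ρ * g * c) • grad2 Y p := by
  simp only [grad2, px, py, Prod.smul_mk, Prod.mk_add_mk, smul_eq_mul, mul_comm ρ c, mul_assoc,
    mul_fderiv_hydrostatic hρ hP hY]
  ext <;> ring

noncomputable def conservativeDeriv (a : ℝ × ℝ × ℝ → ℝ) (w : ℝ × ℝ × ℝ → ℝ × ℝ)
    (p : ℝ × ℝ × ℝ) : ℝ :=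
  pt a p + div2 (fun q => a q • w q) p

noncomputable def materialDeriv (φ : ℝ × ℝ × ℝ → ℝ) (w : ℝ × ℝ × ℝ → ℝ × ℝ)
    (p : ℝ × ℝ × ℝ) : ℝ :=
  pt φ p + dot2 (w p) (grad2 φ p)

section ConservativeDeriv

variable {a φ ψ : ℝ × ℝ × ℝ → ℝ} {w : ℝ × ℝ × ℝ → ℝ × ℝ} {p : ℝ × ℝ × ℝ}

theorem conservativeDeriv_mul (ha : DifferentiableAt ℝ a p) (hφ : DifferentiableAt ℝ φ p)
    (hw : DifferentiableAt ℝ w p) :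
    conservativeDeriv (fun q => a q * φ q) w p
      = φ p * conservativeDeriv a w p + a p * materialDeriv φ w p := by
  simp (disch := fun_prop) only [conservativeDeriv, materialDeriv, div2, grad2, dot2, pt, px, py,
    Prod.smul_fst, Prod.smul_snd, smul_eq_mul, fderiv_fun_mul, add_apply, smul_apply]
  ring

theorem materialDeriv_add (hφ : DifferentiableAt ℝ φ p) (hψ : DifferentiableAt ℝ ψ p) :
    materialDeriv (fun q => φ q + ψ q) w p = materialDeriv φ w p + materialDeriv ψ w p := by
  simp (disch := fun_prop) only [materialDeriv, grad2, dot2, pt, px, py, fderiv_fun_add,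
    add_apply]
  ring

theorem materialDeriv_half_eunorm_sq (hw : DifferentiableAt ℝ w p) :
    materialDeriv (fun q => eunorm (w q) ^ 2 / 2) w p
      = dot2 (w p)
          (materialDeriv (fun q => (w q).1) w p, materialDeriv (fun q => (w q).2) w p) := by
  have hkin : (fun q => eunorm (w q) ^ 2 / 2)
      = fun q => 2⁻¹ * ((w q).1 * (w q).1 + (w q).2 * (w q).2) := by
    ext q; rw [← dot2_self, dot2]; ring
  rw [hkin]
  simp (disch := fun_prop) only [materialDeriv, grad2, dot2, pt, px, py, fderiv_fun_add,
    fderiv_fun_mul, fderiv_fun_const, add_apply, smul_apply, smul_eq_mul, Pi.zero_apply,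
    zero_apply]
  ring

theorem ptv_add_divOuter :
    ptv (fun q => a q • w q) p + divOuter a w p
      = (conservativeDeriv (fun q => a q * (w q).1) w p,
          conservativeDeriv (fun q => a q * (w q).2) w p) := by
  simp only [ptv, divOuter, conservativeDeriv, Prod.smul_fst, Prod.smul_snd, smul_eq_mul,
    Prod.mk_add_mk]

end ConservativeDeriv

theorem pt_sum_add_div2_sum {ι : Type*} {s : Finset ι} {a : ι → ℝ × ℝ × ℝ → ℝ}
    {w : ι → ℝ × ℝ × ℝ → ℝ × ℝ} {p : ℝ × ℝ × ℝ}
    (ha : ∀ α ∈ s, DifferentiableAt ℝ (a α) p) (hw : ∀ α ∈ s, DifferentiableAt ℝ (w α) p) :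
    pt (fun q => ∑ α ∈ s, a α q) p + div2 (fun q => ∑ α ∈ s, a α q • w α q) p
      = ∑ α ∈ s, conservativeDeriv (a α) (w α) p := by
  have hflux₁ : ∀ α ∈ s, DifferentiableAt ℝ (fun q => (a α q • w α q).1) p := fun α hα => by
    have := ha α hα; have := hw α hα; fun_prop
  have hflux₂ : ∀ α ∈ s, DifferentiableAt ℝ (fun q => (a α q • w α q).2) p := fun α hα => by
    have := ha α hα; have := hw α hα; fun_prop
  simp only [conservativeDeriv, div2, pt, px, py, Prod.fst_sum, Prod.snd_sum,
    fderiv_fun_sum ha, fderiv_fun_sum hflux₁, fderiv_fun_sum hflux₂, _root_.sum_apply,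
    ← sum_add_distrib]

theorem layer_energy_balance {ρ m : ℝ} {R : ℝ × ℝ} {a Φ : ℝ × ℝ × ℝ → ℝ}
    {w : ℝ × ℝ × ℝ → ℝ × ℝ} {p : ℝ × ℝ × ℝ}
    (ha : DifferentiableAt ℝ a p) (hw : DifferentiableAt ℝ w p) (hΦ : DifferentiableAt ℝ Φ p)
    (mass : conservativeDeriv a w p = m)
    (momentum :
      ρ • ptv (fun q => a q • w q) p + ρ • divOuter a w p + (ρ * a p) • grad2 Φ p = R) :
    ρ * conservativeDeriv (fun q => a q * (eunorm (w q) ^ 2 / 2 + Φ q)) w p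
      = (ρ * Φ p - ρ * eunorm (w p) ^ 2 / 2) * m + dot2 (w p) R + ρ * a p * pt Φ p := by
  have hw₁ : DifferentiableAt ℝ (fun q => (w q).1) p := by fun_prop
  have hw₂ : DifferentiableAt ℝ (fun q => (w q).2) p := by fun_prop
  have hkin : DifferentiableAt ℝ (fun q => eunorm (w q) ^ 2 / 2) p := by
    have := hw.eunorm_sq; fun_prop
  rw [← smul_add, ptv_add_divOuter, conservativeDeriv_mul ha hw₁ hw,
    conservativeDeriv_mul ha hw₂ hw, mass] at momentum
  rw [conservativeDeriv_mul ha (hkin.fun_add hΦ) hw, materialDeriv_add hkin hΦ,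
    materialDeriv_half_eunorm_sq hw, mass, ← momentum, ← dot2_self]
  simp only [materialDeriv, dot2, grad2, Prod.smul_fst, Prod.smul_snd, Prod.fst_add,
    Prod.snd_add, smul_eq_mul]
  ring

theorem layer_energy_balance_hydrostatic {ρ g m : ℝ} {R : ℝ × ℝ}
    {a P Y Φ : ℝ × ℝ × ℝ → ℝ} {w : ℝ × ℝ × ℝ → ℝ × ℝ} {p : ℝ × ℝ × ℝ} (hρ : ρ ≠ 0)
    (ha : DifferentiableAt ℝ a p) (hw : DifferentiableAt ℝ w p)
    (hP : DifferentiableAt ℝ P p) (hY : DifferentiableAt ℝ Y p)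
    (hΦ : Φ = fun q => ρ⁻¹ * P q + g * Y q)
    (mass : conservativeDeriv a w p = m)
    (momentum : ρ • ptv (fun q => a q • w q) p + ρ • divOuter a w p
      + a p • grad2 P p + (ρ * g * a p) • grad2 Y p = R) :
    ρ * conservativeDeriv (fun q => a q * (eunorm (w q) ^ 2 / 2 + Φ q)) w p
      = (ρ * Φ p - ρ * eunorm (w p) ^ 2 / 2) * m + dot2 (w p) R + ρ * a p * pt Φ p := by
  subst hΦ
  refine layer_energy_balance ha hw (by fun_prop) mass ?_
  rw [smul_grad2_hydrostatic hρ hP hY, ← add_assoc, momentum]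

theorem multilayer_energy_flux {ι : Type*} {s : Finset ι} {ρ g : ℝ}
    {a : ι → ℝ × ℝ × ℝ → ℝ} {w : ι → ℝ × ℝ × ℝ → ℝ × ℝ} {Φ H : ℝ × ℝ × ℝ → ℝ}
    {p : ℝ × ℝ × ℝ}
    (ha : ∀ α ∈ s, Differentiable ℝ (a α)) (hw : ∀ α ∈ s, Differentiable ℝ (w α))
    (hΦ : Differentiable ℝ Φ) (hH : ∀ q, H q = ∑ α ∈ s, a α q) :
    ρ * pt (fun q => ∑ α ∈ s,
          (a α q * (eunorm (w α q) ^ 2 / 2 + Φ q) - g / 2 * a α q * H q)) p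
      + ρ * div2 (fun q => ∑ α ∈ s, (a α q * (eunorm (w α q) ^ 2 / 2 + Φ q)) • w α q) p
      = ∑ α ∈ s,
          ρ * conservativeDeriv (fun q => a α q * (eunorm (w α q) ^ 2 / 2 + Φ q)) (w α) p
        - ρ * g * H p * pt H p := by
  have hsq : ∀ q, ∑ α ∈ s, (a α q * (eunorm (w α q) ^ 2 / 2 + Φ q) - g / 2 * a α q * H q)
      = ∑ α ∈ s, a α q * (eunorm (w α q) ^ 2 / 2 + Φ q) - g / 2 * H q ^ 2 := fun q => by
    rw [sum_sub_distrib, ← sum_mul, ← mul_sum, ← hH]; ring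
  have hψ : ∀ α ∈ s, DifferentiableAt ℝ (fun q => a α q * (eunorm (w α q) ^ 2 / 2 + Φ q)) p :=
    fun α hα => by
      have := ha α hα p; have := hΦ p; have := (hw α hα p).eunorm_sq; fun_prop
  have hH_diff : DifferentiableAt ℝ H p := by
    rw [show H = fun q => ∑ α ∈ s, a α q from funext hH]; exact .fun_sum fun α hα => ha α hα p
  have hpt : pt (fun q => ∑ α ∈ s, a α q * (eunorm (w α q) ^ 2 / 2 + Φ q) - g / 2 * H q ^ 2) p
      = pt (fun q => ∑ α ∈ s, a α q * (eunorm (w α q) ^ 2 / 2 + Φ q)) p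
        - g * H p * pt H p := by
    simp (disch := fun_prop) only [pt, fderiv_fun_sub, fderiv_const_mul, fderiv_fun_pow,
      sub_apply, smul_apply, smul_eq_mul, nsmul_eq_mul, Nat.cast_ofNat, Nat.add_one_sub_one,
      pow_one]
    ring
  simp only [hsq]
  rw [hpt, ← mul_sum, ← pt_sum_add_div2_sum hψ fun α hα => hw α hα p]
  ring

theorem multilayer_energy_inequality_general
    (N : ℕ) (hN : 1 ≤ N) (ρ g : ℝ) (hρ : 0 < ρ)
    (hl : ℕ → ℝ × ℝ × ℝ → ℝ) (u : ℕ → ℝ × ℝ × ℝ → ℝ × ℝ)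
    (pS zb : ℝ × ℝ × ℝ → ℝ) (G : ℕ → ℝ × ℝ × ℝ → ℝ)
    (η : ℕ → ℝ × ℝ × ℝ → ℝ) (μ : ℝ × ℝ × ℝ → ℝ)
    (hmid : ℕ → ℝ × ℝ × ℝ → ℝ)
    (K : ℕ → ℝ × ℝ × ℝ → ℝ × ℝ)
    (htot : ℝ × ℝ × ℝ → ℝ) (E : ℕ → ℝ × ℝ × ℝ → ℝ)
    -- regularity assumptions
    (hl_smooth : ∀ α ∈ Finset.Icc 1 N, ContDiff ℝ 1 (hl α))
    (u_smooth : ∀ α ∈ Finset.Icc 1 N, ContDiff ℝ 1 (u α))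
    (pS_smooth : ContDiff ℝ 1 pS) (zb_smooth : ContDiff ℝ 1 zb)
    -- conventions and definitions
    (htot_def : ∀ p, htot p = ∑ α ∈ Finset.Icc 1 N, hl α p)
    (u_bot : ∀ p, u 0 p = 0) (u_top : ∀ p, u (N + 1) p = 0)
    (hmid_top : ∀ p, hmid N p = hl N p)
    (G_top : ∀ p, G N p = 0)
    (K_bot : ∀ p, K 0 p = (-(μ p * ρ * g * htot p) / eunorm (u 1 p)) • u 1 p)
    (K_def : ∀ α ∈ Finset.Icc 1 N, ∀ p,
      K α p = (-(η α p / hmid α p)) • (u (α + 1) p - u α p))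
    (E_def : ∀ α, ∀ p, E α p =
      hl α p * ((eunorm (u α p)) ^ 2 / 2 + pS p / ρ + g * (zb p + htot p / 2)))
    -- governing equations
    (mass_eq : ∀ α ∈ Finset.Icc 1 N, ∀ p,
      pt (hl α) p + div2 (fun q => hl α q • u α q) p = G α p - G (α - 1) p)
    (mom_eq : ∀ α ∈ Finset.Icc 1 N, ∀ p,
      ρ • ptv (fun q => hl α q • u α q) p + ρ • divOuter (hl α) (u α) p
        + hl α p • grad2 pS p + (ρ * g * hl α p) • grad2 (fun q => zb q + htot q) p
      = K (α - 1) p - K α p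
        + (ρ / 2 * G α p) • (u (α + 1) p + u α p)
        - (ρ / 2 * G (α - 1) p) • (u α p + u (α - 1) p)) :
    ∀ p,
      ρ * pt (fun q => ∑ α ∈ Finset.Icc 1 N, E α q) p
        + ρ * div2 (fun q =>
            ∑ α ∈ Finset.Icc 1 N, (E α q + g * hl α q * htot q / 2) • u α q) p
      ≤ htot p * pt (fun q => pS q + ρ * g * zb q) p
        - μ p * ρ * g * htot p * eunorm (u 1 p)
        - η N p / hl N p * (eunorm (u N p)) ^ 2
        - (∑ α ∈ Finset.Icc 1 (N - 1),
            η α p / hmid α p * (eunorm (u (α + 1) p - u α p)) ^ 2)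
        - G 0 p * (pS p + ρ * g * (zb p + htot p)) := by
  intro p
  obtain ⟨n, rfl⟩ : ∃ n, N = n + 1 := ⟨N - 1, by omega⟩
  have hl_diff α hα : Differentiable ℝ (hl α) := (hl_smooth α hα).differentiable one_ne_zero
  have u_diff α hα : Differentiable ℝ (u α) := (u_smooth α hα).differentiable one_ne_zero
  have hpS := pS_smooth.differentiable one_ne_zero
  have hzb := zb_smooth.differentiable one_ne_zero
  have htot_diff : Differentiable ℝ htot := by
    rw [show htot = _ from funext htot_def]; exact .fun_sum hl_diff
  set Φ : ℝ × ℝ × ℝ → ℝ := fun q => ρ⁻¹ * pS q + g * (zb q + htot q) with hΦ_def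
  have hΦ : Differentiable ℝ Φ := by fun_prop
  have layer := fun α hα => layer_energy_balance_hydrostatic hρ.ne' (hl_diff α hα p)
    (u_diff α hα p) (hpS p) (by fun_prop) hΦ_def (mass_eq α hα p) (mom_eq α hα p)
  have hE α q : E α q = hl α q * (eunorm (u α q) ^ 2 / 2 + Φ q) - g / 2 * hl α q * htot q := by
    rw [E_def]; ring
  have hflux α q : E α q + g * hl α q * htot q / 2 = hl α q * (eunorm (u α q) ^ 2 / 2 + Φ q) := by
    rw [E_def]; ring
  have hpt : ρ * pt Φ p - ρ * g * pt htot p = pt (fun q => pS q + ρ * g * zb q) p := by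
    simp (disch := fun_prop) only [hΦ_def, pt, fderiv_fun_add, fderiv_const_mul, add_apply,
      smul_apply, smul_eq_mul]
    field_simp
    ring
  apply le_of_eq
  simp only [hflux]
  simp only [hE]
  rw [multilayer_energy_flux hl_diff u_diff hΦ htot_def, sum_congr rfl layer,
    sum_add_distrib, sum_interface_exchange n ρ (ρ * Φ p) (G · p) (fun α => η α p / hmid α p)
      (u · p) (K · p) (G_top p) (u_bot p) (u_top p) (fun α hα => K_def α hα p),
    K_bot, dot2_div_eunorm_smul_self, hmid_top, Nat.add_sub_cancel, ← sum_mul, ← mul_sum,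
    ← htot_def, ← hpt, hΦ_def]
  field_simp
  ring

/-- Dissipative energy inequality for the multilayer shallow model. -/
theorem multilayer_energy_inequality
    (N : ℕ) (hN : 1 ≤ N) (ρ g : ℝ) (hρ : 0 < ρ) (hg : 0 < g)
    (hl : ℕ → ℝ × ℝ × ℝ → ℝ) (u : ℕ → ℝ × ℝ × ℝ → ℝ × ℝ)
    (pS zb : ℝ × ℝ × ℝ → ℝ) (G : ℕ → ℝ × ℝ × ℝ → ℝ)
    (η : ℕ → ℝ × ℝ × ℝ → ℝ) (μ : ℝ × ℝ × ℝ → ℝ)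
    (hmid : ℕ → ℝ × ℝ × ℝ → ℝ)
    (K : ℕ → ℝ × ℝ × ℝ → ℝ × ℝ)
    (htot : ℝ × ℝ × ℝ → ℝ) (E : ℕ → ℝ × ℝ × ℝ → ℝ)
    -- regularity assumptions
    (hl_smooth : ∀ α ∈ Finset.Icc 1 N, ContDiff ℝ 1 (hl α))
    (u_smooth : ∀ α ∈ Finset.Icc 1 N, ContDiff ℝ 1 (u α))
    (pS_smooth : ContDiff ℝ 1 pS) (zb_smooth : ContDiff ℝ 1 zb)
    (G_smooth : ∀ α ∈ Finset.Icc 0 N, ContDiff ℝ 1 (G α))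
    (η_smooth : ∀ α ∈ Finset.Icc 1 N, ContDiff ℝ 1 (η α))
    (μ_smooth : ContDiff ℝ 1 μ)
    (hmid_smooth : ∀ α ∈ Finset.Icc 1 (N - 1), ContDiff ℝ 1 (hmid α))
    -- sign assumptions
    (hl_pos : ∀ α ∈ Finset.Icc 1 N, ∀ p, 0 < hl α p)
    (η_nonneg : ∀ α ∈ Finset.Icc 1 N, ∀ p, 0 ≤ η α p)
    (μ_nonneg : ∀ p, 0 ≤ μ p)
    (hmid_pos : ∀ α ∈ Finset.Icc 1 (N - 1), ∀ p, 0 < hmid α p)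
    -- conventions and definitions
    (htot_def : ∀ p, htot p = ∑ α ∈ Finset.Icc 1 N, hl α p)
    (u_bot : ∀ p, u 0 p = 0) (u_top : ∀ p, u (N + 1) p = 0)
    (hmid_top : ∀ p, hmid N p = hl N p)
    (G_top : ∀ p, G N p = 0)
    (u1_ne : ∀ p, u 1 p ≠ 0)
    (K_bot : ∀ p, K 0 p = (-(μ p * ρ * g * htot p) / eunorm (u 1 p)) • u 1 p)
    (K_def : ∀ α ∈ Finset.Icc 1 N, ∀ p,
      K α p = (-(η α p / hmid α p)) • (u (α + 1) p - u α p))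
    (E_def : ∀ α, ∀ p, E α p =
      hl α p * ((eunorm (u α p)) ^ 2 / 2 + pS p / ρ + g * (zb p + htot p / 2)))
    -- governing equations
    (mass_eq : ∀ α ∈ Finset.Icc 1 N, ∀ p,
      pt (hl α) p + div2 (fun q => hl α q • u α q) p = G α p - G (α - 1) p)
    (mom_eq : ∀ α ∈ Finset.Icc 1 N, ∀ p,
      ρ • ptv (fun q => hl α q • u α q) p + ρ • divOuter (hl α) (u α) p
        + hl α p • grad2 pS p + (ρ * g * hl α p) • grad2 (fun q => zb q + htot q) p
      = K (α - 1) p - K α p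
        + (ρ / 2 * G α p) • (u (α + 1) p + u α p)
        - (ρ / 2 * G (α - 1) p) • (u α p + u (α - 1) p)) :
    ∀ p,
      ρ * pt (fun q => ∑ α ∈ Finset.Icc 1 N, E α q) p
        + ρ * div2 (fun q =>
            ∑ α ∈ Finset.Icc 1 N, (E α q + g * hl α q * htot q / 2) • u α q) p
      ≤ htot p * pt (fun q => pS q + ρ * g * zb q) p
        - μ p * ρ * g * htot p * eunorm (u 1 p)
        - η N p / hl N p * (eunorm (u N p)) ^ 2
        - (∑ α ∈ Finset.Icc 1 (N - 1),
            η α p / hmid α p * (eunorm (u (α + 1) p - u α p)) ^ 2)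
        - G 0 p * (pS p + ρ * g * (zb p + htot p)) :=
  multilayer_energy_inequality_general N hN ρ g hρ hl u pS zb G η μ hmid K htot E hl_smooth u_smooth
    pS_smooth zb_smooth htot_def u_bot u_top hmid_top G_top K_bot K_def E_def mass_eq mom_eq
end

section
/- Momentum jump condition in terms of the normal mass flux. Let ε > 0, ρ, a ∈ ℝ, b ∈ ℝ², and let u⁺ = (u_H⁺, w⁺), u⁻ = (u_H⁻, w⁻) ∈ ℝ² × ℝ = ℝ³. Define G± := a + u_H±·b − w±, u_ε± := (u_H±, ε w±) ∈ ℝ³, the 3×3 diagonal matrices ℰ := diag(ε, ε, 1) and 𝔹 := diag(1, 1, ε), and the vector n := (b₁, b₂, −1) ∈ ℝ³. Assume the mass jump condition G⁺ = G⁻ =: G. Then: (i) ρ a (u_ε⁺ − u_ε⁻) + ρ ((u_ε⁺ ⊗ u⁺) − (u_ε⁻ ⊗ u⁻)) n = ρ G 𝔹 (u⁺ − u⁻); (ii) consequently, for any real 3×3 matrices Σ⁺, Σ⁻, the momentum jump condition ρ a (u_ε⁺ − u_ε⁻) + (ρ (u_ε⁺ ⊗ u⁺) − ρ (u_ε⁻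 ⊗ u⁻) − (1/ε)(Σ⁺ − Σ⁻)ℰ) n = 0 holds if and only if (1/ε)(Σ⁺ − Σ⁻) ℰ n = ρ G 𝔹 (u⁺ − u⁻). -/
/-- Momentum jump condition in terms of the normal mass flux. -/
theorem momentum_jump_condition
    (ε ρ a : ℝ) (hε : 0 < ε) (b : ℝ × ℝ)
    (uHp uHm : ℝ × ℝ) (wp wm : ℝ)
    (up um uεp uεm n : Fin 3 → ℝ)
    (hup : up = ![uHp.1, uHp.2, wp]) (hum : um = ![uHm.1, uHm.2, wm])
    (huεp : uεp = ![uHp.1, uHp.2, ε * wp]) (huεm : uεm = ![uHm.1, uHm.2, ε * wm])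
    (hn : n = ![b.1, b.2, -1])
    (calE calB : Matrix (Fin 3) (Fin 3) ℝ)
    (hcalE : calE = Matrix.diagonal ![ε, ε, 1])
    (hcalB : calB = Matrix.diagonal ![1, 1, ε])
    (Gp Gm : ℝ)
    (hGp : Gp = a + (uHp.1 * b.1 + uHp.2 * b.2) - wp)
    (hGm : Gm = a + (uHm.1 * b.1 + uHm.2 * b.2) - wm)
    (mass_jump : Gp = Gm) :
    ((ρ * a) • (uεp - uεm)
        + ρ • ((Matrix.vecMulVec uεp up - Matrix.vecMulVec uεm um).mulVec n)
      = (ρ * Gp) • (calB.mulVec (up - um)))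
    ∧ (∀ Sp Sm : Matrix (Fin 3) (Fin 3) ℝ,
        ((ρ * a) • (uεp - uεm)
            + (ρ • Matrix.vecMulVec uεp up - ρ • Matrix.vecMulVec uεm um
                - (1 / ε) • ((Sp - Sm) * calE)).mulVec n = 0)
        ↔ (1 / ε) • (((Sp - Sm) * calE).mulVec n)
            = (ρ * Gp) • (calB.mulVec (up - um))) := by
  subst hup hum huεp huεm hn hcalE hcalB hGp hGm
  have key : ((ρ * a) • ((![uHp.1, uHp.2, ε * wp] : Fin 3 → ℝ) - ![uHm.1, uHm.2, ε * wm])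
        + ρ • ((Matrix.vecMulVec ![uHp.1, uHp.2, ε * wp] ![uHp.1, uHp.2, wp]
            - Matrix.vecMulVec ![uHm.1, uHm.2, ε * wm] ![uHm.1, uHm.2, wm]).mulVec ![b.1, b.2, -1])
      = ((ρ * (a + (uHp.1 * b.1 + uHp.2 * b.2) - wp)) •
          ((Matrix.diagonal ![1, 1, ε]).mulVec (![uHp.1, uHp.2, wp] - ![uHm.1, uHm.2, wm])))) := by
    funext i
    fin_cases i
    · simp [Matrix.mulVec, Matrix.vecMulVec, Matrix.diagonal, Fin.sum_univ_three,
        Matrix.sub_apply, dotProduct, Matrix.vecHead, Matrix.vecTail]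
      linear_combination ρ * uHm.1 * mass_jump
    · simp [Matrix.mulVec, Matrix.vecMulVec, Matrix.diagonal, Fin.sum_univ_three,
        Matrix.sub_apply, dotProduct, Matrix.vecHead, Matrix.vecTail]
      linear_combination ρ * uHm.2 * mass_jump
    · simp [Matrix.mulVec, Matrix.vecMulVec, Matrix.diagonal, Fin.sum_univ_three,
        Matrix.sub_apply, dotProduct, Matrix.vecHead, Matrix.vecTail]
      linear_combination ε * ρ * wm * mass_jump
  refine ⟨key, fun Sp Sm => ?_⟩
  have expand :
      (ρ • Matrix.vecMulVec ![uHp.1, uHp.2, ε * wp] ![uHp.1, uHp.2, wp]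
        - ρ • Matrix.vecMulVec ![uHm.1, uHm.2, ε * wm] ![uHm.1, uHm.2, wm]
        - (1 / ε) • ((Sp - Sm) * Matrix.diagonal ![ε, ε, 1])).mulVec ![b.1, b.2, -1]
      = ρ • ((Matrix.vecMulVec ![uHp.1, uHp.2, ε * wp] ![uHp.1, uHp.2, wp]
          - Matrix.vecMulVec ![uHm.1, uHm.2, ε * wm] ![uHm.1, uHm.2, wm]).mulVec ![b.1, b.2, -1])
        - (1 / ε) • (((Sp - Sm) * Matrix.diagonal ![ε, ε, 1]).mulVec ![b.1, b.2, -1]) := by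
    rw [Matrix.sub_mulVec, Matrix.sub_mulVec, Matrix.sub_mulVec,
      Matrix.smul_mulVec, Matrix.smul_mulVec, Matrix.smul_mulVec, smul_sub]
  rw [expand]
  constructor
  · intro h
    rw [← key]
    linear_combination (norm := module) -h
  · intro h
    rw [← key] at h
    linear_combination (norm := module) -h
end

section
/- Mass transfer formula at the internal interfaces. Let N ≥ 1 and let l_1,…,l_N be positive reals with Σ_{γ=1}^N l_γ = 1. Let h : ℝ×ℝ² → ℝ, u_1,…,u_N : ℝ×ℝ² → ℝ², and G_{α+1/2} : ℝ×ℝ² → ℝ for α = 0,…,N be continuously differentiable with G_{N+1/2} = 0. Assume that for each α = 1,…,N the mass equation ∂_t(l_α h) + div(l_α h u_α) = G_{α+1/2} − G_{α−1/2} holds at every point. Then for every α = 1,…,N and every point: G_{α+1/2} = (1 − L_α) G_{1/2} + Σ_{γ=1}^N ξ_{α,γ} div(h u_γ), where L_α := l_1 + ⋯ + l_α and ξ_{α,γ} := (1 − L_α) l_γ if γ ≤ α and ξ_{α,γ} := −L_α l_γ if γ > α. -/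
open Finset

-- No differentiability is needed: for `c ≠ 0`, multiplication by `c` is a linear isomorphism.
theorem fderiv_const_mul_field_apply {𝕜 E : Type*} [NontriviallyNormedField 𝕜]
    [NormedAddCommGroup E] [NormedSpace 𝕜 E] (c : 𝕜) (f : E → 𝕜) (x v : E) :
    fderiv 𝕜 (fun y => c * f y) x v = c * fderiv 𝕜 f x v := by
  change fderiv 𝕜 (c • f) x v = _
  rw [fderiv_const_smul_field]
  rfl

theorem pt_const_mul (c : ℝ) (f : ℝ × ℝ × ℝ → ℝ) (p : ℝ × ℝ × ℝ) :
    pt (fun q => c * f q) p = c * pt f p :=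
  fderiv_const_mul_field_apply c f p _

theorem div2_const_smul (c : ℝ) (v : ℝ × ℝ × ℝ → ℝ × ℝ) (p : ℝ × ℝ × ℝ) :
    div2 (fun q => c • v q) p = c * div2 v p := by
  simp only [div2, px, py, Prod.smul_fst, Prod.smul_snd, smul_eq_mul,
    fderiv_const_mul_field_apply]
  ring

theorem pt_add_div2_const_mul (c : ℝ) (h : ℝ × ℝ × ℝ → ℝ) (u : ℝ × ℝ × ℝ → ℝ × ℝ)
    (p : ℝ × ℝ × ℝ) :
    pt (fun q => c * h q) p + div2 (fun q => (c * h q) • u q) p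
      = c * (pt h p + div2 (fun q => h q • u q) p) := by
  simp only [mul_smul, pt_const_mul, div2_const_smul, mul_add]

theorem sum_Icc_one_sub_pred {M : Type*} [AddCommGroup M] (f : ℕ → M) (n : ℕ) :
    ∑ i ∈ Icc 1 n, (f i - f (i - 1)) = f n - f 0 := by
  induction n with
  | zero => simp
  | succ n ih =>
    rw [sum_Icc_succ_top (by omega), ih, Nat.add_sub_cancel]
    abel

theorem sum_Icc_ite_le {M : Type*} [AddCommMonoid M] {α N : ℕ} (hα : α ≤ N) (f : ℕ → M) :
    ∑ γ ∈ Icc 1 N, (if γ ≤ α then f γ else 0) = ∑ γ ∈ Icc 1 α, f γ := by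
  rw [← sum_filter]
  congr 1
  ext γ
  simp only [mem_filter, mem_Icc]
  omega

section Telescoping

variable {N : ℕ} {l d g : ℕ → ℝ} {τ : ℝ}

theorem eq_add_sum_of_increments
    (hstep : ∀ β ∈ Icc 1 N, g β - g (β - 1) = l β * (τ + d β)) {α : ℕ} (hα : α ≤ N) :
    g α = g 0 + (∑ γ ∈ Icc 1 α, l γ) * τ + ∑ γ ∈ Icc 1 α, l γ * d γ := by
  have hsum : g α - g 0 = ∑ γ ∈ Icc 1 α, l γ * (τ + d γ) := by
    rw [← sum_Icc_one_sub_pred]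
    exact sum_congr rfl fun β hβ => hstep β (Icc_subset_Icc_right hα hβ)
  simp only [mul_add, sum_add_distrib, ← sum_mul] at hsum
  linarith

theorem eq_of_increments_of_top_eq_zero (hl : ∑ γ ∈ Icc 1 N, l γ = 1) (htop : g N = 0)
    (hstep : ∀ β ∈ Icc 1 N, g β - g (β - 1) = l β * (τ + d β)) {α : ℕ} (hα : α ≤ N) :
    g α = (1 - ∑ γ ∈ Icc 1 α, l γ) * g 0
      + ∑ γ ∈ Icc 1 N,
          (if γ ≤ α then (1 - ∑ β ∈ Icc 1 α, l β) * l γ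
            else -((∑ β ∈ Icc 1 α, l β) * l γ)) * d γ := by
  set Lα := ∑ β ∈ Icc 1 α, l β
  have hξ : ∀ γ, (if γ ≤ α then (1 - Lα) * l γ else -(Lα * l γ)) * d γ
      = (if γ ≤ α then l γ * d γ else 0) - Lα * (l γ * d γ) := by
    intro γ
    split_ifs <;> ring
  have hbottom := eq_add_sum_of_increments hstep hα
  have hsurface := eq_add_sum_of_increments hstep le_rfl
  rw [htop, hl] at hsurface
  simp only [hξ, sum_sub_distrib, sum_Icc_ite_le hα, ← mul_sum]
  linear_combination hbottom - Lα * hsurface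

end Telescoping

theorem mass_transfer_formula_general
    (N : ℕ)
    (l : ℕ → ℝ)
    (l_sum : ∑ γ ∈ Finset.Icc 1 N, l γ = 1)
    (h : ℝ × ℝ × ℝ → ℝ) (u : ℕ → ℝ × ℝ × ℝ → ℝ × ℝ)
    (G : ℕ → ℝ × ℝ × ℝ → ℝ)
    -- no mass transfer with the atmosphere
    (G_top : ∀ p, G N p = 0)
    -- partial sums and coefficients
    (L : ℕ → ℝ) (hL : ∀ α, L α = ∑ β ∈ Finset.Icc 1 α, l β)
    (ξ : ℕ → ℕ → ℝ)
    (hξ : ∀ α γ, ξ α γ = if γ ≤ α then (1 - L α) * l γ else -(L α * l γ))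
    -- layer mass equations
    (mass_eq : ∀ α ∈ Finset.Icc 1 N, ∀ p,
      pt (fun q => l α * h q) p + div2 (fun q => (l α * h q) • u α q) p
        = G α p - G (α - 1) p) :
    ∀ α ∈ Finset.Icc 1 N, ∀ p,
      G α p = (1 - L α) * G 0 p
        + ∑ γ ∈ Finset.Icc 1 N, ξ α γ * div2 (fun q => h q • u γ q) p := by
  intro α hα p
  have layer : ∀ β ∈ Icc 1 N, G β p - G (β - 1) p
      = l β * (pt h p + div2 (fun q => h q • u β q) p) := fun β hβ => by
    rw [← mass_eq β hβ p, pt_add_div2_const_mul]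
  simp only [hξ, hL]
  exact eq_of_increments_of_top_eq_zero l_sum (G_top p) layer (mem_Icc.1 hα).2

/-- Mass transfer formula at the internal interfaces of the multilayer model. -/
theorem mass_transfer_formula
    (N : ℕ) (hN : 1 ≤ N)
    (l : ℕ → ℝ) (l_pos : ∀ α ∈ Finset.Icc 1 N, 0 < l α)
    (l_sum : ∑ γ ∈ Finset.Icc 1 N, l γ = 1)
    (h : ℝ × ℝ × ℝ → ℝ) (u : ℕ → ℝ × ℝ × ℝ → ℝ × ℝ)
    (G : ℕ → ℝ × ℝ × ℝ → ℝ)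
    -- regularity assumptions
    (h_smooth : ContDiff ℝ 1 h)
    (u_smooth : ∀ α ∈ Finset.Icc 1 N, ContDiff ℝ 1 (u α))
    (G_smooth : ∀ α ∈ Finset.Icc 0 N, ContDiff ℝ 1 (G α))
    -- no mass transfer with the atmosphere
    (G_top : ∀ p, G N p = 0)
    -- partial sums and coefficients
    (L : ℕ → ℝ) (hL : ∀ α, L α = ∑ β ∈ Finset.Icc 1 α, l β)
    (ξ : ℕ → ℕ → ℝ)
    (hξ : ∀ α γ, ξ α γ = if γ ≤ α then (1 - L α) * l γ else -(L α * l γ))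
    -- layer mass equations
    (mass_eq : ∀ α ∈ Finset.Icc 1 N, ∀ p,
      pt (fun q => l α * h q) p + div2 (fun q => (l α * h q) • u α q) p
        = G α p - G (α - 1) p) :
    ∀ α ∈ Finset.Icc 1 N, ∀ p,
      G α p = (1 - L α) * G 0 p
        + ∑ γ ∈ Finset.Icc 1 N, ξ α γ * div2 (fun q => h q • u γ q) p :=
  mass_transfer_formula_general N l l_sum h u G G_top L hL ξ hξ mass_eq
end
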